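/- arXiv:2409.20193 — 4 statements merged into one kernel-verified Lean document; each statement's English description precedes it below -/
import Mathlib

section
/- The liquidation function L(x,y) = x + (b₀ + y·S_(y))⁺ for y ≥ 0 and L(x,y) = x − a₀ + y·S̄(−y) for y < 0 is superadditive: L((x,y)+(x̄,ȳ)) ≥ L(x,y) + L(x̄,ȳ) for all (x,y), (x̄,ȳ) ∈ ℝ². -/
theorem liquidation_superadditive
    (Su Sb : ℝ → ℝ) (a₀ b₀ : ℝ) (ha₀ : 0 ≤ a₀) (hb₀ : b₀ ≤ 0)
    (a b : ℝ → ℝ)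
    (ha : ∀ l, a l = a₀ + l * Sb l) (hb : ∀ m, b m = b₀ + m * Su m)
    (hSu : MonotoneOn Su (Set.Ici (0:ℝ))) (hSb : AntitoneOn Sb (Set.Ici (0:ℝ)))
    (hbconv : ConvexOn ℝ (Set.Ici (0:ℝ)) b) (hbmono : MonotoneOn b (Set.Ici (0:ℝ)))
    (haconc : ConcaveOn ℝ (Set.Ici (0:ℝ)) a) (hamono : MonotoneOn a (Set.Ici (0:ℝ)))
    (hbsuper : ∀ m₁ m₂ : ℝ, 0 ≤ m₁ → 0 ≤ m₂ → b (m₁ + m₂) ≥ b m₁ + b m₂)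
    (hab : ∀ l₁ l₂ : ℝ, 0 < l₂ → l₂ < l₁ → a (l₁ - l₂) < a l₁ - b l₂)
    (hba : ∀ m₁ m₂ : ℝ, 0 < m₂ → m₂ < m₁ → b (m₁ - m₂) > b m₁ - a m₂)
    (L : ℝ × ℝ → ℝ)
    (hLpos : ∀ x y : ℝ, 0 ≤ y → L (x, y) = x + max (b₀ + y * Su y) 0)
    (hLneg : ∀ x y : ℝ, y < 0 → L (x, y) = x - a₀ + y * Sb (-y)) :
    ∀ v w : ℝ × ℝ, L (v + w) ≥ L v + L w := by
  have hb0 : b 0 = b₀ := by rw [hb]; ring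
  have ha0 : a 0 = a₀ := by rw [ha]; ring
  have haNN : ∀ l : ℝ, 0 ≤ l → 0 ≤ a l := by
    intro l hl
    have := hamono (Set.mem_Ici.2 le_rfl) (Set.mem_Ici.2 hl) hl
    rw [ha0] at this; linarith
  -- subadditivity of a on [0, ∞)
  have hkey : ∀ s t u : ℝ, 0 < s + t → 0 ≤ u → u ≤ s + t →
      (u / (s + t)) * a (s + t) ≤ a u := by
    intro s t u hst hu hust
    have hle1 : u / (s + t) ≤ 1 := (div_le_one hst).2 hust
    have h1 := haconc.2 (Set.mem_Ici.2 hst.le) (Set.mem_Ici.2 (le_refl (0:ℝ)))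
      (show (0:ℝ) ≤ u / (s + t) from div_nonneg hu hst.le)
      (show (0:ℝ) ≤ 1 - u / (s + t) by linarith)
      (show u / (s + t) + (1 - u / (s + t)) = 1 by ring)
    simp only [smul_eq_mul, mul_zero, add_zero, ha0] at h1
    have he : u / (s + t) * (s + t) = u := by field_simp
    rw [he] at h1
    have h2 : 0 ≤ (1 - u / (s + t)) * a₀ := by
      have : u / (s + t) ≤ 1 := (div_le_one hst).2 hust
      exact mul_nonneg (by linarith) ha₀
    linarith
  have hasub : ∀ s t : ℝ, 0 ≤ s → 0 ≤ t → a (s + t) ≤ a s + a t := by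
    intro s t hs ht
    rcases eq_or_lt_of_le (by linarith : (0:ℝ) ≤ s + t) with h | h
    · have hs0 : s = 0 := by linarith
      have ht0 : t = 0 := by linarith
      subst hs0; subst ht0
      simp only [add_zero, ha0]; linarith
    · have h1 := hkey s t s h hs (by linarith)
      have h2 := hkey s t t h ht (by linarith)
      have h3 : s / (s + t) + t / (s + t) = 1 := by field_simp
      have h4 : s / (s + t) * a (s + t) + t / (s + t) * a (s + t) = a (s + t) := by
        rw [← add_mul, h3, one_mul]
      linarith
  -- b y ≤ a y for y > 0
  have hble : ∀ y : ℝ, 0 < y → b y ≤ a y := by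
    intro y hy
    have hchain : ∀ m : ℝ, 0 < m → m < y → b y - a y < b₀ + (y - m) * Su y := by
      intro m hm hmy
      have h1 := hba y m hm hmy
      have h2 : a m ≤ a y := hamono (Set.mem_Ici.2 hm.le) (Set.mem_Ici.2 hy.le) hmy.le
      have h3 : b (y - m) = b₀ + (y - m) * Su (y - m) := hb _
      have h4 : Su (y - m) ≤ Su y := hSu (Set.mem_Ici.2 (by linarith)) (Set.mem_Ici.2 hy.le)
        (by linarith)
      nlinarith [sub_nonneg.2 hmy.le]
    by_contra hcon
    push_neg at hcon
    have hcpos : 0 < b y - a y - b₀ := by linarith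
    set c : ℝ := b y - a y - b₀ with hc
    rcases le_or_gt (Su y) 0 with hS | hS
    · have h := hchain (y/2) (by linarith) (by linarith)
      nlinarith
    · set m : ℝ := max (y/2) (y - c/(2*Su y)) with hm
      have hm1 : 0 < m := lt_of_lt_of_le (by linarith) (le_max_left _ _)
      have hm2 : m < y := by
        apply max_lt (by linarith)
        have : 0 < c/(2*Su y) := div_pos hcpos (by linarith)
        linarith
      have h := hchain m hm1 hm2
      have h5 : y - m ≤ c/(2*Su y) := by
        have := le_max_right (y/2) (y - c/(2*Su y)); linarith
      have h6 : (y - m) * Su y ≤ c/2 := by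
        have := mul_le_mul_of_nonneg_right h5 hS.le
        have heq : c/(2*Su y) * Su y = c/2 := by field_simp
        linarith
      linarith
  rintro ⟨x, y⟩ ⟨z, w⟩
  simp only [Prod.mk_add_mk, ge_iff_le]
  -- main case analysis on the signs of y, w, y + w
  rcases le_or_gt 0 y with hy | hy <;> rcases le_or_gt 0 w with hw | hw
  · -- both nonneg
    rw [hLpos _ _ hy, hLpos _ _ hw, hLpos _ _ (by linarith : (0:ℝ) ≤ y + w)]
    rw [show b₀ + y * Su y = b y from (hb y).symm,
        show b₀ + w * Su w = b w from (hb w).symm,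
        show b₀ + (y + w) * Su (y + w) = b (y + w) from (hb (y + w)).symm]
    have h1 := hbsuper y w hy hw
    have h2 := hbmono (Set.mem_Ici.2 hy) (Set.mem_Ici.2 (by linarith : (0:ℝ) ≤ y + w)) (by linarith)
    have h3 := hbmono (Set.mem_Ici.2 hw) (Set.mem_Ici.2 (by linarith : (0:ℝ) ≤ y + w)) (by linarith)
    have hl := le_max_left (b (y + w)) 0
    have hr := le_max_right (b (y + w)) 0
    rcases le_total (b y) 0 with h | h <;> rcases le_total (b w) 0 with h' | h' <;>
      simp only [max_eq_right h, max_eq_left h, max_eq_right h', max_eq_left h'] <;> linarith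
  · -- y ≥ 0, w < 0
    rcases le_or_gt 0 (y + w) with hs | hs
    · rw [hLpos _ _ hy, hLneg _ _ hw, hLpos _ _ hs]
      rw [show b₀ + y * Su y = b y from (hb y).symm,
          show b₀ + (y + w) * Su (y + w) = b (y + w) from (hb (y + w)).symm]
      have hea : a (-w) = a₀ + (-w) * Sb (-w) := ha _
      have hann : 0 ≤ a (-w) := haNN _ (by linarith)
      have hl := le_max_left (b (y + w)) 0
      have hr := le_max_right (b (y + w)) 0
      rcases eq_or_lt_of_le hs with h0 | h0
      · -- y + w = 0
        have hyw : y = -w := by linarith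
        have hby : b y ≤ a (-w) := hyw ▸ hble y (by linarith)
        rcases le_total (b y) 0 with h | h <;>
          simp only [max_eq_right h, max_eq_left h] <;> linarith
      · have hstrict := hba y (-w) (by linarith) (by linarith)
        rw [show y - -w = y + w by ring] at hstrict
        rcases le_total (b y) 0 with h | h <;>
          simp only [max_eq_right h, max_eq_left h] <;> linarith
    · rw [hLpos _ _ hy, hLneg _ _ hw, hLneg _ _ hs]
      rw [show b₀ + y * Su y = b y from (hb y).symm]
      have hea : a (-w) = a₀ + (-w) * Sb (-w) := ha _
      have hes : a (-(y + w)) = a₀ + (-(y + w)) * Sb (-(y + w)) := ha _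
      have hmono' : a (-(y + w)) ≤ a (-w) :=
        hamono (Set.mem_Ici.2 (by linarith)) (Set.mem_Ici.2 (by linarith)) (by linarith)
      rcases eq_or_lt_of_le hy with h0 | h0
      · -- y = 0
        have hy0 : y = 0 := h0.symm
        subst hy0
        simp only [hb0, max_eq_right hb₀]
        simp only [zero_add] at hes ⊢
        nlinarith
      · have hstrict := hab (-w) y h0 (by linarith)
        rw [show -w - y = -(y + w) by ring] at hstrict
        rcases le_total (b y) 0 with h | h <;>
          simp only [max_eq_right h, max_eq_left h] <;> nlinarith
  · -- y < 0, w ≥ 0  (mirror of previous case)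
    rcases le_or_gt 0 (y + w) with hs | hs
    · rw [hLneg _ _ hy, hLpos _ _ hw, hLpos _ _ hs]
      rw [show b₀ + w * Su w = b w from (hb w).symm,
          show b₀ + (y + w) * Su (y + w) = b (y + w) from (hb (y + w)).symm]
      have hea : a (-y) = a₀ + (-y) * Sb (-y) := ha _
      have hann : 0 ≤ a (-y) := haNN _ (by linarith)
      have hl := le_max_left (b (y + w)) 0
      have hr := le_max_right (b (y + w)) 0
      rcases eq_or_lt_of_le hs with h0 | h0
      · have hyw : w = -y := by linarith
        have hbw : b w ≤ a (-y) := hyw ▸ hble w (by linarith)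
        rcases le_total (b w) 0 with h | h <;>
          simp only [max_eq_right h, max_eq_left h] <;> linarith
      · have hstrict := hba w (-y) (by linarith) (by linarith)
        rw [show w - -y = y + w by ring] at hstrict
        rcases le_total (b w) 0 with h | h <;>
          simp only [max_eq_right h, max_eq_left h] <;> linarith
    · rw [hLneg _ _ hy, hLpos _ _ hw, hLneg _ _ hs]
      rw [show b₀ + w * Su w = b w from (hb w).symm]
      have hea : a (-y) = a₀ + (-y) * Sb (-y) := ha _
      have hes : a (-(y + w)) = a₀ + (-(y + w)) * Sb (-(y + w)) := ha _
      have hmono' : a (-(y + w)) ≤ a (-y) :=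
        hamono (Set.mem_Ici.2 (by linarith)) (Set.mem_Ici.2 (by linarith)) (by linarith)
      rcases eq_or_lt_of_le hw with h0 | h0
      · have hw0 : w = 0 := h0.symm
        subst hw0
        simp only [hb0, max_eq_right hb₀]
        simp only [add_zero] at hes ⊢
        nlinarith
      · have hstrict := hab (-y) w h0 (by linarith)
        rw [show -y - w = -(y + w) by ring] at hstrict
        rcases le_total (b w) 0 with h | h <;>
          simp only [max_eq_right h, max_eq_left h] <;> nlinarith
  · -- both negative
    rw [hLneg _ _ hy, hLneg _ _ hw, hLneg _ _ (by linarith : y + w < 0)]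
    have hea : a (-y) = a₀ + (-y) * Sb (-y) := ha _
    have heb : a (-w) = a₀ + (-w) * Sb (-w) := ha _
    have hes : a (-(y + w)) = a₀ + (-(y + w)) * Sb (-(y + w)) := ha _
    have hsub := hasub (-y) (-w) (by linarith) (by linarith)
    rw [show -y + -w = -(y + w) by ring] at hsub
    nlinarith
end

section
/- For every λ ≥ 1 and every position (x,y) ∈ ℝ², the liquidation function satisfies L(λx, λy) ≥ λ·L(x,y); consequently λ·G ⊆ G where G = {(x,y) : L(x,y) ≥ 0}. -/
theorem liquidation_superhomogeneous
    (a b : ℝ → ℝ) (a₀ b₀ : ℝ) (ha₀ : 0 ≤ a₀) (hb₀ : b₀ ≤ 0)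
    (ha0 : a 0 = a₀) (hb0 : b 0 = b₀)
    (haconc : ConcaveOn ℝ (Set.Ici (0:ℝ)) a) (hamono : MonotoneOn a (Set.Ici (0:ℝ)))
    (hbconv : ConvexOn ℝ (Set.Ici (0:ℝ)) b) (hbmono : MonotoneOn b (Set.Ici (0:ℝ)))
    (hascal : ∀ lam l : ℝ, 1 ≤ lam → 0 ≤ l → a (lam * l) ≤ lam * a l)
    (hbscal : ∀ lam m : ℝ, 1 ≤ lam → 0 ≤ m → b (lam * m) ≥ lam * b m)
    (L : ℝ × ℝ → ℝ)
    (hLpos : ∀ x y : ℝ, 0 ≤ y → L (x, y) = x + max (b y) 0)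
    (hLneg : ∀ x y : ℝ, y < 0 → L (x, y) = x - a (-y)) :
    ∀ lam : ℝ, 1 ≤ lam →
      (∀ x y : ℝ, L (lam * x, lam * y) ≥ lam * L (x, y)) ∧
      (∀ p : ℝ × ℝ, p ∈ {q : ℝ × ℝ | 0 ≤ L q} → lam • p ∈ {q : ℝ × ℝ | 0 ≤ L q}) := by
  intro lam hlam
  have hlam0 : (0:ℝ) < lam := lt_of_lt_of_le one_pos hlam
  have main : ∀ x y : ℝ, L (lam * x, lam * y) ≥ lam * L (x, y) := by
    intro x y
    rcases le_or_gt 0 y with hy | hy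
    · have hy' : 0 ≤ lam * y := mul_nonneg hlam0.le hy
      rw [hLpos _ _ hy', hLpos _ _ hy, mul_add]
      have h1 : lam * max (b y) 0 = max (lam * b y) 0 := by
        rw [mul_max_of_nonneg _ _ hlam0.le, mul_zero]
      rw [h1]
      have h2 : lam * b y ≤ b (lam * y) := hbscal lam y hlam hy
      have : lam * x + max (lam * b y) 0 ≤ lam * x + max (b (lam * y)) 0 := by
        gcongr
      linarith
    · have hy' : lam * y < 0 := mul_neg_of_pos_of_neg hlam0 hy
      rw [hLneg _ _ hy', hLneg _ _ hy, mul_sub]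
      have h2 : a (lam * (-y)) ≤ lam * a (-y) := hascal lam (-y) hlam (by linarith)
      have : -(lam * y) = lam * (-y) := by ring
      rw [this]
      linarith
  refine ⟨main, ?_⟩
  intro p hp
  have := main p.1 p.2
  simp only [Set.mem_setOf_eq] at hp ⊢
  have hL : lam * L p ≤ L (lam * p.1, lam * p.2) := this
  have : lam • p = (lam * p.1, lam * p.2) := rfl
  rw [this]
  nlinarith
end

section
/- Let T be a finite horizon, (𝓕_t)_{t≤T} a filtration, and for each t let K̄_t be an 𝓕_t-measurable closed convex cone in ℝ² containing ℝ₊² with K̄_t + K̄_t ⊆ K̄_t. Define R̄⁰_T = Σ_{t=0}^T L⁰(−K̄_t, 𝓕_t). Then the condition (a) 'R̄⁰_T ∩ L⁰(K̄_t, 𝓕_t) = {0} for every t = 0,…,T' is equivalent to (b) 'whenever Σ_{i=0}^T ξ_i = 0 with ξ_i ∈ L⁰(K̄_i, 𝓕_i), then all ξ_i = 0', assuming each K̄_t is a proper cone (K̄_t ∩ (−K̄_t) = {0}). -/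
/-!
Both directions are rearrangements of a single identity. If `∑ ξᵢ = 0` with `ξᵢ ∈ L⁰(K̄ᵢ, 𝓕ᵢ)`,
then `ξₜ = ∑_{i ≠ t} (-ξᵢ)` a.s. is an attainable claim lying in `L⁰(K̄ₜ, 𝓕ₜ)`, so (a) kills it.
Conversely, if `f = ∑ ηᵢ` is attainable with `f ∈ L⁰(K̄ₜ, 𝓕ₜ)`, then `ζᵢ = -ηᵢ + 𝟙_{i = t} f`
lies in `L⁰(K̄ᵢ, 𝓕ᵢ)` (using `K̄ₜ + K̄ₜ ⊆ K̄ₜ`) and sums to zero, so (b) gives `f = ηₜ`, which lies in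
`K̄ₜ ∩ (-K̄ₜ) = {0}`.
-/

open MeasureTheory Finset Pointwise

/-- `f` is an `F`-measurable random variable with values in `A ω` a.s. -/
def MemL0 {Ω : Type*} [MeasurableSpace Ω] (μ : Measure Ω) (F : MeasurableSpace Ω)
    (A : Ω → Set (ℝ × ℝ)) (f : Ω → ℝ × ℝ) : Prop :=
  @Measurable Ω (ℝ × ℝ) F _ f ∧ ∀ᵐ ω ∂μ, f ω ∈ A ω

/-- `f` is an attainable claim at horizon `T` from zero endowment:
`f = ∑_{t ≤ T} ξ_t` with `ξ_t ∈ L⁰(−K̄_t, 𝓕_t)`. -/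
def Attainable {Ω : Type*} [MeasurableSpace Ω] (μ : Measure Ω)
    (F : ℕ → MeasurableSpace Ω) (K : ℕ → Ω → Set (ℝ × ℝ)) (T : ℕ)
    (f : Ω → ℝ × ℝ) : Prop :=
  ∃ ξ : ℕ → Ω → ℝ × ℝ,
    (∀ t ≤ T, MemL0 μ (F t) (fun ω => -(K t ω)) (ξ t)) ∧
    ∀ ω, f ω = ∑ t ∈ Finset.range (T + 1), ξ t ω

section MemL0

variable {Ω : Type*} {F G : MeasurableSpace Ω} [MeasurableSpace Ω] {μ : Measure Ω}
  {A B : Ω → Set (ℝ × ℝ)} {f g : Ω → ℝ × ℝ}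

theorem MemL0.neg (hf : MemL0 μ F A f) : MemL0 μ F (fun ω => -A ω) (-f) :=
  ⟨hf.1.neg, hf.2.mono fun _ h => Set.neg_mem_neg.mpr h⟩

theorem MemL0.add (hf : MemL0 μ F A f) (hg : MemL0 μ F B g) :
    MemL0 μ F (fun ω => A ω + B ω) (f + g) :=
  ⟨hf.1.add hg.1, by filter_upwards [hf.2, hg.2] with ω h₁ h₂ using Set.add_mem_add h₁ h₂⟩

theorem MemL0.mono (hf : MemL0 μ F A f) (hAB : ∀ ω, A ω ⊆ B ω) : MemL0 μ F B f :=
  ⟨hf.1, hf.2.mono fun ω h => hAB ω h⟩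

theorem MemL0.measurable_of_le (hf : MemL0 μ F A f) (hFG : F ≤ G) : Measurable[G] f :=
  hf.1.mono hFG le_rfl

theorem MemL0.congr (hf : MemL0 μ F A f) (hg : Measurable[F] g) (hfg : f =ᵐ[μ] g) :
    MemL0 μ F A g :=
  ⟨hg, by filter_upwards [hf.2, hfg] with ω h e using e ▸ h⟩

theorem memL0_zero (h₀ : ∀ ω, (0 : ℝ × ℝ) ∈ A ω) : MemL0 μ F A 0 :=
  ⟨measurable_const, ae_of_all _ h₀⟩

end MemL0

theorem Set.zero_mem_of_inter_neg_eq_zero {α : Type*} [Zero α] [Neg α] {s : Set α}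
    (hs : s ∩ -s = {0}) : (0 : α) ∈ s :=
  (hs.symm ▸ rfl : (0 : α) ∈ s ∩ -s).1

theorem Set.eq_zero_of_mem_of_mem_neg {α : Type*} [Zero α] [Neg α] {s : Set α}
    (hs : s ∩ -s = {0}) {x : α} (hx : x ∈ s) (hx' : x ∈ -s) : x = 0 :=
  Set.mem_singleton_iff.mp (hs ▸ ⟨hx, hx'⟩)

theorem Finset.sum_add_ite_eq {M : Type*} [AddCommMonoid M] {s : Finset ℕ} {t : ℕ} (ht : t ∈ s)
    (g : ℕ → M) (a : M) : ∑ i ∈ s, (g i + if i = t then a else 0) = ∑ i ∈ s, g i + a := by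
  rw [sum_add_distrib, sum_ite_eq' s t, if_pos ht]

section Attainable

variable {Ω : Type*} [MeasurableSpace Ω] {μ : Measure Ω} {F : ℕ → MeasurableSpace Ω}
  {K : ℕ → Ω → Set (ℝ × ℝ)} {T : ℕ}

/-- The null residual `f - ∑ ηₜ` is `𝓕_T`-measurable, so it can be absorbed into the last
trade `η_T`. -/
theorem attainable_of_ae_eq_sum (hF : Monotone F) {f : Ω → ℝ × ℝ} {η : ℕ → Ω → ℝ × ℝ}
    (hη : ∀ t ≤ T, MemL0 μ (F t) (fun ω => -K t ω) (η t)) (hf : Measurable[F T] f)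
    (hsum : ∀ᵐ ω ∂μ, f ω = ∑ t ∈ range (T + 1), η t ω) : Attainable μ F K T f := by
  set r : Ω → ℝ × ℝ := fun ω => f ω - ∑ t ∈ range (T + 1), η t ω with hr
  have hr_meas : Measurable[F T] r :=
    hf.sub (Finset.measurable_sum _ fun t ht =>
      (hη t (mem_range_succ_iff.mp ht)).measurable_of_le (hF (mem_range_succ_iff.mp ht)))
  refine ⟨fun t => η t + if t = T then r else 0, fun t ht => ?_, fun ω => ?_⟩
  · beta_reduce
    by_cases htT : t = T
    · subst htT
      rw [if_pos rfl]
      refine (hη t ht).congr ((hη t ht).1.add hr_meas) ?_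
      filter_upwards [hsum] with ω h
      simp [hr, h]
    · rw [if_neg htT, add_zero]
      exact hη t ht
  · simp only [Pi.add_apply, ite_apply, Pi.zero_apply]
    rw [sum_add_ite_eq (self_mem_range_succ T), hr, add_sub_cancel]

theorem ae_eq_zero_of_sum_ae_eq_zero (hF : Monotone F) {t : ℕ} (ht : t ≤ T)
    (h₀ : ∀ ω, (0 : ℝ × ℝ) ∈ K t ω)
    (hNA : ∀ f, Attainable μ F K T f → MemL0 μ (F t) (K t) f → f =ᵐ[μ] 0)
    {ξ : ℕ → Ω → ℝ × ℝ} (hξ : ∀ i ≤ T, MemL0 μ (F i) (K i) (ξ i))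
    (hsum : ∀ᵐ ω ∂μ, ∑ i ∈ range (T + 1), ξ i ω = 0) :
    ξ t =ᵐ[μ] 0 := by
  have hη : ∀ i ≤ T, MemL0 μ (F i) (fun ω => -K i ω) (-ξ i + if i = t then ξ t else 0) := by
    intro i hi
    by_cases hit : i = t
    · subst hit
      rw [if_pos rfl, neg_add_cancel]
      exact memL0_zero fun ω => by simpa using h₀ ω
    · rw [if_neg hit, add_zero]
      exact (hξ i hi).neg
  refine hNA _ (attainable_of_ae_eq_sum hF hη ((hξ t ht).measurable_of_le (hF ht)) ?_)
    (hξ t ht)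
  filter_upwards [hsum] with ω h
  simp only [Pi.add_apply, Pi.neg_apply, ite_apply, Pi.zero_apply]
  rw [sum_add_ite_eq (mem_range_succ_iff.mpr ht), sum_neg_distrib, h, neg_zero, zero_add]

theorem ae_eq_zero_of_attainable_of_memL0 {t : ℕ} (ht : t ≤ T)
    (hadd : ∀ ω, K t ω + K t ω ⊆ K t ω) (hproper : ∀ ω, K t ω ∩ -(K t ω) = {0})
    (hsum_zero : ∀ ξ : ℕ → Ω → ℝ × ℝ, (∀ i ≤ T, MemL0 μ (F i) (K i) (ξ i)) →
      (∀ᵐ ω ∂μ, ∑ i ∈ range (T + 1), ξ i ω = 0) → ξ t =ᵐ[μ] 0)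
    {f : Ω → ℝ × ℝ} (hf : Attainable μ F K T f)
    (hfK : MemL0 μ (F t) (K t) f) : f =ᵐ[μ] 0 := by
  obtain ⟨η, hη, hfη⟩ := hf
  set ζ : ℕ → Ω → ℝ × ℝ := fun i => -η i + if i = t then f else 0 with hζ
  have hζK : ∀ i ≤ T, MemL0 μ (F i) (K i) (ζ i) := by
    intro i hi
    have hnegη : MemL0 μ (F i) (K i) (-η i) := by simpa using (hη i hi).neg
    simp only [hζ]
    by_cases hit : i = t
    · subst hit
      rw [if_pos rfl]
      exact (hnegη.add hfK).mono hadd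
    · rw [if_neg hit, add_zero]
      exact hnegη
  have hζsum : ∀ᵐ ω ∂μ, ∑ i ∈ range (T + 1), ζ i ω = 0 := ae_of_all _ fun ω => by
    simp only [hζ, Pi.add_apply, Pi.neg_apply, ite_apply, Pi.zero_apply]
    rw [sum_add_ite_eq (mem_range_succ_iff.mpr ht), sum_neg_distrib, ← hfη ω, neg_add_cancel]
  filter_upwards [hsum_zero ζ hζK hζsum, hfK.2, (hη t ht).2] with ω hζt hfω hηω
  have hηf : η t ω = f ω := by simpa [hζ, neg_add_eq_zero] using hζt
  exact Set.eq_zero_of_mem_of_mem_neg (hproper ω) hfω (hηf ▸ hηω)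

end Attainable

theorem noArbitrage_tA1_iff_sum_zero_general
    {Ω : Type*} [MeasurableSpace Ω] (μ : Measure Ω)
    (F : ℕ → MeasurableSpace Ω)
    (hFmono : Monotone F)
    (K : ℕ → Ω → Set (ℝ × ℝ)) (T : ℕ)
    (hadd : ∀ t ω, K t ω + K t ω ⊆ K t ω)
    (hproper : ∀ t ω, K t ω ∩ -(K t ω) = {0}) :
    (∀ t ≤ T, ∀ f : Ω → ℝ × ℝ, Attainable μ F K T f →
        MemL0 μ (F t) (K t) f → f =ᵐ[μ] 0) ↔
    (∀ ξ : ℕ → Ω → ℝ × ℝ, (∀ i ≤ T, MemL0 μ (F i) (K i) (ξ i)) →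
        (∀ᵐ ω ∂μ, ∑ i ∈ Finset.range (T + 1), ξ i ω = 0) →
        ∀ i ≤ T, ξ i =ᵐ[μ] 0) :=
  ⟨fun hNA _ hξ hsum i hi => ae_eq_zero_of_sum_ae_eq_zero hFmono hi
      (fun ω => Set.zero_mem_of_inter_neg_eq_zero (hproper i ω)) (hNA i hi) hξ hsum,
    fun hsum_zero t ht _ hf hfK =>
      ae_eq_zero_of_attainable_of_memL0 ht (hadd t) (hproper t)
        (fun ξ hξ hsum => hsum_zero ξ hξ hsum t ht) hf hfK⟩

theorem noArbitrage_tA1_iff_sum_zero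
    {Ω : Type*} [MeasurableSpace Ω] (μ : Measure Ω) [IsProbabilityMeasure μ]
    (F : ℕ → MeasurableSpace Ω) (hFle : ∀ t, F t ≤ ‹MeasurableSpace Ω›)
    (hFmono : Monotone F)
    (K : ℕ → Ω → Set (ℝ × ℝ)) (T : ℕ)
    (hclosed : ∀ t ω, IsClosed (K t ω))
    (hconvex : ∀ t ω, Convex ℝ (K t ω))
    (hcone : ∀ t ω, ∀ c : ℝ, 0 ≤ c → ∀ p ∈ K t ω, c • p ∈ K t ω)
    (hpos : ∀ t ω, {p : ℝ × ℝ | 0 ≤ p.1 ∧ 0 ≤ p.2} ⊆ K t ω)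
    (hadd : ∀ t ω, K t ω + K t ω ⊆ K t ω)
    (hproper : ∀ t ω, K t ω ∩ -(K t ω) = {0}) :
    (∀ t ≤ T, ∀ f : Ω → ℝ × ℝ, Attainable μ F K T f →
        MemL0 μ (F t) (K t) f → f =ᵐ[μ] 0) ↔
    (∀ ξ : ℕ → Ω → ℝ × ℝ, (∀ i ≤ T, MemL0 μ (F i) (K i) (ξ i)) →
        (∀ᵐ ω ∂μ, ∑ i ∈ Finset.range (T + 1), ξ i ω = 0) →
        ∀ i ≤ T, ξ i =ᵐ[μ] 0) :=
  noArbitrage_tA1_iff_sum_zero_general μ F hFmono K T hadd hproper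
end

section
/- With notation as in the previous statement, condition (b) 'Σ_{i=0}^T ξ_i = 0 with ξ_i ∈ L⁰(K̄_i, 𝓕_i) implies all ξ_i = 0' is equivalent to (c) 'for each t ≤ T, R̄⁰_t ∩ L⁰(K̄_t, 𝓕_t) = {0}', where R̄⁰_t = Σ_{i=0}^t L⁰(−K̄_i, 𝓕_i). -/
open MeasureTheory Finset Pointwise

private lemma aux_rev {Ω : Type*} [MeasurableSpace Ω] (μ : Measure Ω)
    (F : ℕ → MeasurableSpace Ω) (hFmono : Monotone F)
    (K : ℕ → Ω → Set (ℝ × ℝ))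
    (hpos : ∀ t ω, {p : ℝ × ℝ | 0 ≤ p.1 ∧ 0 ≤ p.2} ⊆ K t ω) :
    ∀ T : ℕ, (∀ t ≤ T, ∀ f : Ω → ℝ × ℝ, Attainable μ F K t f →
        MemL0 μ (F t) (K t) f → f =ᵐ[μ] 0) →
      ∀ ξ : ℕ → Ω → ℝ × ℝ, (∀ i ≤ T, MemL0 μ (F i) (K i) (ξ i)) →
        (∀ᵐ ω ∂μ, ∑ i ∈ Finset.range (T + 1), ξ i ω = 0) →
        ∀ i ≤ T, ξ i =ᵐ[μ] 0 := by
  have hzero : ∀ (t : ℕ) (ω : Ω), (0 : ℝ × ℝ) ∈ K t ω := fun t ω =>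
    hpos t ω ⟨le_rfl, le_rfl⟩
  intro T
  induction T with
  | zero =>
    intro _ ξ _ hsum i hi
    interval_cases i
    filter_upwards [hsum] with ω hω
    simpa using hω
  | succ T ih =>
    intro hC ξ hξ hsum
    set f : Ω → ℝ × ℝ := fun ω => -∑ i ∈ Finset.range (T + 1), ξ i ω with hf_def
    have hAtt : Attainable μ F K (T + 1) f := by
      refine ⟨fun i ω => if i ≤ T then -ξ i ω else 0, fun t ht => ?_, fun ω => ?_⟩
      · by_cases h : t ≤ T
        · simp only [h, if_true]
          refine ⟨(hξ t (h.trans (Nat.le_succ T))).1.neg, ?_⟩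
          filter_upwards [(hξ t (h.trans (Nat.le_succ T))).2] with ω hω
          exact Set.neg_mem_neg.mpr hω
        · simp only [h, if_false]
          exact ⟨measurable_const, Filter.Eventually.of_forall fun ω => by
            simp [Set.mem_neg, hzero t ω]⟩
      · rw [Finset.sum_range_succ]
        simp only [lt_irrefl, Nat.lt_irrefl, le_refl]
        rw [if_neg (by omega : ¬ T + 1 ≤ T)]
        rw [Finset.sum_congr rfl (fun i hi => by
          rw [if_pos (Nat.lt_succ_iff.mp (Finset.mem_range.mp hi))])]
        simp [hf_def]
    have hMem : MemL0 μ (F (T + 1)) (K (T + 1)) f := by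
      constructor
      · refine (Finset.measurable_sum _ fun i hi => ?_).neg
        have hi' : i ≤ T := Nat.lt_succ_iff.mp (Finset.mem_range.mp hi)
        exact ((hξ i (hi'.trans (Nat.le_succ T))).1).mono
          (hFmono (Nat.le_succ_of_le hi')) le_rfl
      · filter_upwards [hsum, (hξ (T + 1) le_rfl).2] with ω hω hmem
        have hfeq : f ω = ξ (T + 1) ω := by
          rw [Finset.sum_range_succ] at hω
          simp only [hf_def]
          exact neg_eq_of_add_eq_zero_right hω
        rw [hfeq]
        exact hmem
    have hf0 : f =ᵐ[μ] 0 := hC (T + 1) le_rfl f hAtt hMem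
    have hlast : ξ (T + 1) =ᵐ[μ] 0 := by
      filter_upwards [hsum, hf0] with ω hω hfω
      have : ∑ i ∈ Finset.range (T + 1), ξ i ω = 0 := by
        have := hfω
        simp only [hf_def, Pi.zero_apply, neg_eq_zero] at this
        exact this
      rw [Finset.sum_range_succ, this, zero_add] at hω
      simpa using hω
    have hsum' : ∀ᵐ ω ∂μ, ∑ i ∈ Finset.range (T + 1), ξ i ω = 0 := by
      filter_upwards [hf0] with ω hfω
      simpa [hf_def, neg_eq_zero] using hfω
    intro i hi
    by_cases h : i ≤ T
    · exact ih (fun t ht => hC t (ht.trans (Nat.le_succ T))) ξ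
        (fun j hj => hξ j (hj.trans (Nat.le_succ T))) hsum' i h
    · have : i = T + 1 := by omega
      subst this
      exact hlast

theorem noArbitrage_sum_zero_iff_stepwise
    {Ω : Type*} [MeasurableSpace Ω] (μ : Measure Ω) [IsProbabilityMeasure μ]
    (F : ℕ → MeasurableSpace Ω) (hFle : ∀ t, F t ≤ ‹MeasurableSpace Ω›)
    (hFmono : Monotone F)
    (K : ℕ → Ω → Set (ℝ × ℝ)) (T : ℕ)
    (hclosed : ∀ t ω, IsClosed (K t ω))
    (hconvex : ∀ t ω, Convex ℝ (K t ω))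
    (hcone : ∀ t ω, ∀ c : ℝ, 0 ≤ c → ∀ p ∈ K t ω, c • p ∈ K t ω)
    (hpos : ∀ t ω, {p : ℝ × ℝ | 0 ≤ p.1 ∧ 0 ≤ p.2} ⊆ K t ω)
    (hadd : ∀ t ω, K t ω + K t ω ⊆ K t ω)
    (hproper : ∀ t ω, K t ω ∩ -(K t ω) = {0}) :
    (∀ ξ : ℕ → Ω → ℝ × ℝ, (∀ i ≤ T, MemL0 μ (F i) (K i) (ξ i)) →
        (∀ᵐ ω ∂μ, ∑ i ∈ Finset.range (T + 1), ξ i ω = 0) →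
        ∀ i ≤ T, ξ i =ᵐ[μ] 0) ↔
    (∀ t ≤ T, ∀ f : Ω → ℝ × ℝ, Attainable μ F K t f →
        MemL0 μ (F t) (K t) f → f =ᵐ[μ] 0) := by
  have hzero : ∀ (t : ℕ) (ω : Ω), (0 : ℝ × ℝ) ∈ K t ω := fun t ω =>
    hpos t ω ⟨le_rfl, le_rfl⟩
  constructor
  · intro hB t ht f ⟨ξ, hξ, hsumf⟩ hf
    set ζ : ℕ → Ω → ℝ × ℝ := fun i ω =>
      if i < t then -ξ i ω else if i = t then f ω - ξ t ω else 0 with hζ_def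
    have hmem : ∀ i ≤ T, MemL0 μ (F i) (K i) (ζ i) := by
      intro i hi
      rcases lt_trichotomy i t with h | h | h
      · simp only [hζ_def, h, if_true]
        refine ⟨(hξ i h.le).1.neg, ?_⟩
        filter_upwards [(hξ i h.le).2] with ω hω
        exact Set.mem_neg.mp hω
      · subst h
        simp only [hζ_def, lt_irrefl, if_false, if_pos rfl]
        refine ⟨hf.1.sub (hξ i le_rfl).1, ?_⟩
        filter_upwards [hf.2, (hξ i le_rfl).2] with ω h1 h2
        have : f ω - ξ i ω = f ω + (-ξ i ω) := by ring
        rw [this]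
        exact hadd i ω (Set.add_mem_add h1 (Set.mem_neg.mp h2))
      · simp only [hζ_def, if_neg (by omega : ¬ i < t), if_neg (by omega : i ≠ t)]
        exact ⟨measurable_const, Filter.Eventually.of_forall fun ω => hzero i ω⟩
    have hsum0 : ∀ᵐ ω ∂μ, ∑ i ∈ Finset.range (T + 1), ζ i ω = 0 := by
      refine Filter.Eventually.of_forall fun ω => ?_
      have hsub : ∑ i ∈ Finset.range (T + 1), ζ i ω
          = ∑ i ∈ Finset.range (t + 1), ζ i ω := by
        refine (Finset.sum_subset (by
          intro x hx
          simp only [Finset.mem_range] at hx ⊢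
          omega) ?_).symm
        intro x hx hx'
        simp only [Finset.mem_range] at hx hx'
        simp only [hζ_def, if_neg (by omega : ¬ x < t), if_neg (by omega : x ≠ t)]
      have h1 : ∑ i ∈ Finset.range t, ζ i ω = ∑ i ∈ Finset.range t, (-ξ i ω) :=
        Finset.sum_congr rfl fun i hi => by
          simp only [hζ_def, if_pos (Finset.mem_range.mp hi)]
      have hfω := hsumf ω
      rw [Finset.sum_range_succ] at hfω
      rw [hsub, Finset.sum_range_succ, h1]
      simp only [hζ_def, lt_irrefl, if_false, if_pos rfl]
      rw [hfω, Finset.sum_neg_distrib, add_sub_cancel_right]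
      simp
    have hζt := hB ζ hmem hsum0 t ht
    filter_upwards [hζt, hf.2, (hξ t le_rfl).2] with ω h0 h1 h2
    have hfeq : f ω = ξ t ω := by
      simp only [hζ_def, lt_irrefl, if_false, if_pos rfl, Pi.zero_apply] at h0
      have := sub_eq_zero.mp h0
      exact this
    have : f ω ∈ K t ω ∩ -(K t ω) := ⟨h1, hfeq ▸ h2⟩
    rw [hproper t ω] at this
    exact this
  · intro hC
    exact aux_rev μ F hFmono K hpos T hC
end
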